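/- arXiv:1905.12925 — 3 statements merged into one kernel-verified Lean document; each statement's English description precedes it below -/
import Mathlib

section
/- Let (X,ρ) be a metric space with ρ ≤ 1, Q a probability distribution over X, and τ ∈ (0,1). Let c, t ∈ X such that Q[{x : ρ(x,c) < ρ(t,c)}] ≤ τ. Then E_{X∼Q}[ρ(X,t)] ≤ (1 + 1/(1−τ)) · E_{X∼Q}[ρ(X,c)]. -/
/-!
By the triangle inequality, `E ρ(X, t) ≤ E ρ(X, c) + ρ(t, c)`. Since at least a `1 - τ` fraction
of the mass lies at distance `≥ ρ(t, c)` from `c`, Markov's inequality gives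
`(1 - τ) ρ(t, c) ≤ E ρ(X, c)`. When `ρ(·, c)` is not integrable, neither is `ρ(·, t)`, and both
integrals vanish.
-/

open MeasureTheory

section

variable {α : Type*} [MeasurableSpace α] {μ : Measure α}

theorem mul_one_sub_le_integral_of_measure_lt_le [IsProbabilityMeasure μ] {f : α → ℝ}
    (hf_nonneg : ∀ x, 0 ≤ f x) (hf : Integrable f μ) {a τ : ℝ} (ha : 0 ≤ a) (hτ : 0 ≤ τ)
    (hmass : μ {x | f x < a} ≤ ENNReal.ofReal τ) :
    a * (1 - τ) ≤ ∫ x, f x ∂μ := by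
  have hlarge : 1 - τ ≤ μ.real {x | a ≤ f x} := by
    have hcompl : {x | a ≤ f x}ᶜ = {x | f x < a} := by ext; simp
    have hsmall : μ.real {x | a ≤ f x}ᶜ ≤ τ := by
      rw [hcompl]; exact ENNReal.toReal_le_of_le_ofReal hτ hmass
    rw [probReal_compl_eq_one_sub₀ (aestronglyMeasurable_const.nullMeasurableSet_le hf.1)]
      at hsmall
    linarith
  calc a * (1 - τ) ≤ a * μ.real {x | a ≤ f x} := mul_le_mul_of_nonneg_left hlarge ha
    _ ≤ ∫ x, f x ∂μ := mul_meas_ge_le_integral_of_nonneg (.of_forall hf_nonneg) hf a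

end

section

variable {X : Type*} [PseudoMetricSpace X] [MeasurableSpace X] {μ : Measure X}

theorem integral_dist_le_integral_dist_add [IsProbabilityMeasure μ] {c : X}
    (hc : Integrable (fun x => dist x c) μ) (t : X) :
    ∫ x, dist x t ∂μ ≤ ∫ x, dist x c ∂μ + dist c t := by
  calc ∫ x, dist x t ∂μ ≤ ∫ x, (dist x c + dist c t) ∂μ :=
        integral_mono_of_nonneg (.of_forall fun _ => dist_nonneg) (hc.add (integrable_const _))
          (.of_forall fun x => dist_triangle x c t)
    _ = ∫ x, dist x c ∂μ + dist c t := by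
        rw [integral_add hc (integrable_const _), integral_const, probReal_univ, one_smul]

theorem integrable_dist_of_integrable_dist [OpensMeasurableSpace X] [IsFiniteMeasure μ] {a : X}
    (b : X) (ha : Integrable (fun x => dist x a) μ) : Integrable (fun x => dist x b) μ := by
  refine (ha.add (integrable_const (dist a b))).mono'
    (continuous_id.dist continuous_const).aestronglyMeasurable (.of_forall fun x => ?_)
  rw [Real.norm_of_nonneg dist_nonneg]
  exact dist_triangle _ _ _

end

theorem stmt0_general {X : Type*} [MetricSpace X] [MeasurableSpace X] [BorelSpace X]
    (Q : Measure X) [IsProbabilityMeasure Q]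
    (τ : ℝ) (hτ : τ ∈ Set.Ioo (0:ℝ) 1)
    (c t : X)
    (hmass : Q {x | dist x c < dist t c} ≤ ENNReal.ofReal τ) :
    ∫ x, dist x t ∂Q ≤ (1 + 1/(1 - τ)) * ∫ x, dist x c ∂Q := by
  obtain ⟨hτ0, hτ1⟩ := hτ
  by_cases hc : Integrable (fun x => dist x c) Q
  · have hmarkov : dist t c * (1 - τ) ≤ ∫ x, dist x c ∂Q :=
      mul_one_sub_le_integral_of_measure_lt_le (fun _ => dist_nonneg) hc dist_nonneg hτ0.le hmass
    have hdist : dist t c ≤ 1 / (1 - τ) * ∫ x, dist x c ∂Q := by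
      rw [one_div_mul_eq_div, le_div_iff₀ (by linarith)]
      exact hmarkov
    calc ∫ x, dist x t ∂Q ≤ ∫ x, dist x c ∂Q + dist c t :=
          integral_dist_le_integral_dist_add hc t
      _ ≤ (1 + 1 / (1 - τ)) * ∫ x, dist x c ∂Q := by rw [dist_comm]; linarith
  · have ht : ¬Integrable (fun x => dist x t) Q := mt (integrable_dist_of_integrable_dist c) hc
    simp [integral_undef hc, integral_undef ht]

theorem stmt0 {X : Type*} [MetricSpace X] [MeasurableSpace X] [BorelSpace X]
    (Q : Measure X) [IsProbabilityMeasure Q]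
    (hbound : ∀ x y : X, dist x y ≤ 1)
    (τ : ℝ) (hτ : τ ∈ Set.Ioo (0:ℝ) 1)
    (c t : X)
    (hmass : Q {x | dist x c < dist t c} ≤ ENNReal.ofReal τ) :
    ∫ x, dist x t ∂Q ≤ (1 + 1/(1 - τ)) * ∫ x, dist x c ∂Q :=
  stmt0_general Q τ hτ c t hmass
end

section
/- Let (X,ρ) be a metric space with ρ ≤ 1 and Q a distribution over X. Given centers O = {c_1,…,c_k} and replacements T = {t_1,…,t_k} with Q[{x : ρ(x,c_i) < ρ(t_i,c_i)}] ≤ τ for each i, then for any γ ∈ (0,1/2), R(Q,T) ≤ (2+2γ)·R(Q,O) + kτ/γ, where R(Q,T) := E_{X∼Q}[min_i ρ(X,t_i)] is the k-median risk. -/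
open MeasureTheory

theorem stmt1 {X : Type*} [MetricSpace X] [MeasurableSpace X] [BorelSpace X]
    (Q : Measure X) [IsProbabilityMeasure Q]
    (hbound : ∀ x y : X, dist x y ≤ 1)
    (k : ℕ) (hk : 0 < k) (c t : Fin k → X)
    (τ γ : ℝ) (hτ : τ ∈ Set.Ioo (0:ℝ) 1) (hγ : γ ∈ Set.Ioo (0:ℝ) (1/2))
    (hmass : ∀ i, Q {x | dist x (c i) < dist (t i) (c i)} ≤ ENNReal.ofReal τ) :
    ∫ x, ⨅ i, dist x (t i) ∂Q ≤
      (2 + 2*γ) * ∫ x, ⨅ i, dist x (c i) ∂Q + k * τ / γ := by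
  classical
  obtain ⟨hτ0, hτ1⟩ := hτ
  obtain ⟨hγ0, hγ2⟩ := hγ
  have hne : Nonempty (Fin k) := ⟨⟨0, hk⟩⟩
  -- basic facts about infima of distances
  have hbb : ∀ (f : Fin k → X) (x : X), BddBelow (Set.range fun i => dist x (f i)) := by
    intro f x
    exact ⟨0, by rintro r ⟨i, rfl⟩; exact dist_nonneg⟩
  have hinf_le : ∀ (f : Fin k → X) (x : X) (i : Fin k), (⨅ j, dist x (f j)) ≤ dist x (f i) :=
    fun f x i => ciInf_le (hbb f x) i
  have hinf_nonneg : ∀ (f : Fin k → X) (x : X), 0 ≤ ⨅ j, dist x (f j) :=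
    fun f x => le_ciInf fun j => dist_nonneg
  have hinf_le_one : ∀ (f : Fin k → X) (x : X), (⨅ j, dist x (f j)) ≤ 1 :=
    fun f x => le_trans (hinf_le f x ⟨0, hk⟩) (hbound _ _)
  have cont_inf : ∀ (f : Fin k → X), Continuous fun x : X => ⨅ i, dist x (f i) := by
    intro f
    have h : (fun x : X => ⨅ i, dist x (f i))
        = fun x => Finset.univ.inf' Finset.univ_nonempty (fun i => dist x (f i)) := by
      funext x; rw [Finset.inf'_univ_eq_ciInf]
    rw [h]
    exact Continuous.finset_inf'_apply Finset.univ_nonempty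
      (fun i _ => Continuous.dist continuous_id continuous_const)
  have hint : ∀ (f : Fin k → X), Integrable (fun x => ⨅ i, dist x (f i)) Q := by
    intro f
    refine (integrable_const (1:ℝ)).mono' (cont_inf f).aestronglyMeasurable ?_
    refine Filter.Eventually.of_forall fun x => ?_
    rw [Real.norm_eq_abs, abs_of_nonneg (hinf_nonneg f x)]
    exact hinf_le_one f x
  have hdist_int : ∀ (i : Fin k), Integrable (fun x => dist x (c i)) Q := by
    intro i
    refine (integrable_const (1:ℝ)).mono'
      (Continuous.dist continuous_id continuous_const).aestronglyMeasurable ?_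
    refine Filter.Eventually.of_forall fun x => ?_
    rw [Real.norm_eq_abs, abs_of_nonneg dist_nonneg]
    exact hbound _ _
  -- Voronoi cells
  set C : Fin k → Set X := fun i =>
    {x | ∀ j, dist x (c i) ≤ dist x (c j)} ∩
    {x | ∀ j, j < i → ∃ l, dist x (c l) < dist x (c j)} with hCdef
  have hCmeas : ∀ i, MeasurableSet (C i) := by
    intro i
    apply MeasurableSet.inter
    · have h : {x : X | ∀ j, dist x (c i) ≤ dist x (c j)}
          = ⋂ j, {x | dist x (c i) ≤ dist x (c j)} := by ext x; simp
      rw [h]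
      exact MeasurableSet.iInter fun j => measurableSet_le
        (Continuous.dist continuous_id continuous_const).measurable
        (Continuous.dist continuous_id continuous_const).measurable
    · have h : {x : X | ∀ j, j < i → ∃ l, dist x (c l) < dist x (c j)}
          = ⋂ j, ⋂ _ : j < i, ⋃ l, {x | dist x (c l) < dist x (c j)} := by
        ext x; simp
      rw [h]
      exact MeasurableSet.iInter fun j => MeasurableSet.iInter fun _ =>
        MeasurableSet.iUnion fun l => measurableSet_lt
          (Continuous.dist continuous_id continuous_const).measurable
          (Continuous.dist continuous_id continuous_const).measurable
  have hCcover : (⋃ i, C i) = Set.univ := by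
    ext x
    simp only [Set.mem_iUnion, Set.mem_univ, iff_true]
    obtain ⟨i0, -, hi0⟩ := Finset.exists_min_image Finset.univ (fun i => dist x (c i))
      ⟨⟨0, hk⟩, Finset.mem_univ _⟩
    set S := Finset.univ.filter (fun i : Fin k => ∀ j, dist x (c i) ≤ dist x (c j)) with hS
    have hSne : S.Nonempty := ⟨i0, by
      simp only [hS, Finset.mem_filter, Finset.mem_univ, true_and]
      exact fun j => hi0 j (Finset.mem_univ j)⟩
    refine ⟨S.min' hSne, ?_, ?_⟩
    · have h := S.min'_mem hSne
      simp only [hS, Finset.mem_filter, Finset.mem_univ, true_and] at h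
      exact h
    · intro j hj
      by_contra h
      push_neg at h
      have hjS : j ∈ S := by
        simp only [hS, Finset.mem_filter, Finset.mem_univ, true_and]
        exact h
      exact absurd (S.min'_le j hjS) (not_le.mpr hj)
  have hCdisj : Pairwise (Function.onFun Disjoint C) := by
    have hkey : ∀ i j : Fin k, i < j → Disjoint (C i) (C j) := by
      intro i j hij
      rw [Set.disjoint_left]
      rintro x ⟨hx1, -⟩ ⟨-, hx2⟩
      obtain ⟨l, hl⟩ := hx2 i hij
      exact absurd (hx1 l) (not_le.mpr hl)
    intro i j hij
    rcases lt_or_gt_of_ne hij with h | h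
    · exact hkey i j h
    · exact (hkey j i h).symm
  have hdecomp : ∀ (g : X → ℝ), Integrable g Q →
      ∫ x, g x ∂Q = ∑ i, ∫ x in C i, g x ∂Q := by
    intro g hg
    have h := integral_iUnion hCmeas hCdisj (hg.integrableOn)
    rw [hCcover, Measure.restrict_univ, tsum_fintype] at h
    exact h
  -- key per-cell estimate
  have key : ∀ i, ∫ x in C i, (⨅ j, dist x (t j)) ∂Q
      ≤ (2 + 2*γ) * ∫ x in C i, (⨅ j, dist x (c j)) ∂Q + τ/γ := by
    intro i
    set r := dist (t i) (c i) with hr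
    have hr0 : 0 ≤ r := dist_nonneg
    have hBmeas : MeasurableSet {x : X | dist x (c i) < r} :=
      measurableSet_lt (Continuous.dist continuous_id continuous_const).measurable
        measurable_const
    set q := (Q (C i)).toReal with hq
    set a := (Q (C i ∩ {x | dist x (c i) < r})).toReal with ha
    have hq0 : 0 ≤ q := ENNReal.toReal_nonneg
    have ha0 : 0 ≤ a := ENNReal.toReal_nonneg
    have haτ : a ≤ τ := by
      have h1 : Q (C i ∩ {x | dist x (c i) < r}) ≤ ENNReal.ofReal τ :=
        le_trans (measure_mono Set.inter_subset_right) (hmass i)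
      calc a ≤ (ENNReal.ofReal τ).toReal :=
            ENNReal.toReal_mono (by simp) h1
        _ = τ := ENNReal.toReal_ofReal hτ0.le
    have hIC : ∫ x in C i, (⨅ j, dist x (c j)) ∂Q = ∫ x in C i, dist x (c i) ∂Q := by
      refine setIntegral_congr_fun (hCmeas i) fun x hx => ?_
      exact le_antisymm (hinf_le c x i) (le_ciInf fun j => hx.1 j)
    have hICnn : 0 ≤ ∫ x in C i, (⨅ j, dist x (c j)) ∂Q :=
      setIntegral_nonneg (hCmeas i) fun x _ => hinf_nonneg c x
    by_cases hcase : γ * q ≤ a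
    · -- small cell: total mass at most τ/γ
      have hqτγ : q ≤ τ/γ := by
        rw [le_div_iff₀ hγ0]
        calc q * γ = γ * q := mul_comm _ _
          _ ≤ a := hcase
          _ ≤ τ := haτ
      have h1 : ∫ x in C i, (⨅ j, dist x (t j)) ∂Q ≤ ∫ x in C i, (1:ℝ) ∂Q :=
        setIntegral_mono_on ((hint t).integrableOn) (integrableOn_const (measure_ne_top Q _))
          (hCmeas i) (fun x _ => hinf_le_one t x)
      rw [setIntegral_const, smul_eq_mul, mul_one] at h1
      have h2 : (0:ℝ) ≤ (2 + 2*γ) * ∫ x in C i, (⨅ j, dist x (c j)) ∂Q :=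
        mul_nonneg (by linarith) hICnn
      calc ∫ x in C i, (⨅ j, dist x (t j)) ∂Q ≤ q := h1
        _ ≤ τ/γ := hqτγ
        _ ≤ (2 + 2*γ) * (∫ x in C i, (⨅ j, dist x (c j)) ∂Q) + τ/γ := by linarith
    · push_neg at hcase  -- a < γ * q
      set D := C i \ {x | dist x (c i) < r} with hD
      have hDmeas : MeasurableSet D := (hCmeas i).diff hBmeas
      have hDsub : D ⊆ C i := Set.diff_subset
      have hsplit : a + (Q D).toReal = q := by
        rw [ha, hq, hD, ← ENNReal.toReal_add (measure_ne_top Q _) (measure_ne_top Q _),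
          measure_inter_add_diff (C i) hBmeas]
      set I := ∫ x in C i, dist x (c i) ∂Q with hI
      have hIlb : (q - a) * r ≤ I := by
        have h1 : ∫ x in D, (r:ℝ) ∂Q ≤ ∫ x in D, dist x (c i) ∂Q := by
          refine setIntegral_mono_on (integrableOn_const (measure_ne_top Q _))
            ((hdist_int i).integrableOn) hDmeas fun x hx => ?_
          exact not_lt.mp hx.2
        have h2 : ∫ x in D, dist x (c i) ∂Q ≤ I := by
          refine setIntegral_mono_set (hdist_int i).integrableOn ?_
            (HasSubset.Subset.eventuallyLE hDsub)
          exact Filter.Eventually.of_forall fun x => dist_nonneg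
        rw [setIntegral_const, smul_eq_mul] at h1
        have : (Q D).toReal = q - a := by linarith
        rw [show Q.real D = q - a from this] at h1
        linarith
      have hup : ∫ x in C i, (⨅ j, dist x (t j)) ∂Q ≤ I + q * r := by
        have h1 : ∫ x in C i, (⨅ j, dist x (t j)) ∂Q
            ≤ ∫ x in C i, (dist x (c i) + r) ∂Q := by
          refine setIntegral_mono_on ((hint t).integrableOn) ?_ (hCmeas i) fun x _ => ?_
          · exact ((hdist_int i).add (integrable_const r)).integrableOn
          · calc (⨅ j, dist x (t j)) ≤ dist x (t i) := hinf_le t x i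
              _ ≤ dist x (c i) + dist (c i) (t i) := dist_triangle _ _ _
              _ = dist x (c i) + r := by rw [hr, dist_comm (c i) (t i)]
        rw [integral_add ((hdist_int i).integrableOn) (integrableOn_const (measure_ne_top Q _)),
          setIntegral_const, smul_eq_mul] at h1
        exact h1
      have hInn : 0 ≤ I := setIntegral_nonneg (hCmeas i) fun x _ => dist_nonneg
      have hqr0 : 0 ≤ q * r := mul_nonneg hq0 hr0
      have hkey : (1 - γ) * (q * r) ≤ I := by nlinarith
      have hfinal : I + q * r ≤ (2 + 2*γ) * I + τ/γ := by
        have hτγ : 0 ≤ τ/γ := div_nonneg hτ0.le hγ0.le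
        nlinarith [mul_nonneg (mul_nonneg hγ0.le (by linarith : (0:ℝ) ≤ 1 - 2*γ)) hqr0]
      rw [hIC]
      calc ∫ x in C i, (⨅ j, dist x (t j)) ∂Q ≤ I + q * r := hup
        _ ≤ (2 + 2*γ) * I + τ/γ := hfinal
  -- assemble
  calc ∫ x, ⨅ i, dist x (t i) ∂Q = ∑ i, ∫ x in C i, (⨅ j, dist x (t j)) ∂Q :=
        hdecomp _ (hint t)
    _ ≤ ∑ i : Fin k, ((2 + 2*γ) * ∫ x in C i, (⨅ j, dist x (c j)) ∂Q + τ/γ) :=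
        Finset.sum_le_sum fun i _ => key i
    _ = (2 + 2*γ) * (∑ i, ∫ x in C i, (⨅ j, dist x (c j)) ∂Q) + k * τ / γ := by
        rw [Finset.sum_add_distrib, ← Finset.mul_sum, Finset.sum_const, Finset.card_univ,
          Fintype.card_fin, nsmul_eq_mul, mul_div_assoc]
    _ = (2 + 2*γ) * ∫ x, ⨅ i, dist x (c i) ∂Q + k * τ / γ := by
        rw [← hdecomp _ (hint c)]
end

section
/- Let Y_1,…,Y_n be i.i.d. random variables in [0,1] with mean μ, and let μ̂ = (1/n)∑ Y_i. If the empirical Bernstein inequality μ̂ − μ ≤ 7ln(2/δ)/(3(n−1)) + sqrt(2σ̂² ln(2/δ)/n) holds (where σ̂² is the sample variance) with probability at least 1−δ, then with probability at least 1−δ, μ̂ ≤ max(16 ln(2/δ)/(n−1), 2μ). -/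
/-!
On `[0,1]` one has `(a - b)² ≤ a + b`, so the sample variance is at most the sample mean `m`.
Feeding this into the empirical Bernstein bound, with `t = ln(2/δ)/(n-1)`, gives
`m - μ ≤ 7t/3 + √(2mt)`. Once `m ≥ 16t` the right-hand side is at most `m/2`, hence `m ≤ 2μ`.
So the event of the Bernstein bound is contained in the event `m ≤ max (16t) (2μ)`.
-/

open MeasureTheory ProbabilityTheory Finset

noncomputable def sampleVariance {n : ℕ} (y : Fin n → ℝ) : ℝ :=
  (1 / (2 * n * (n - 1))) * ∑ i, ∑ j, if i ≠ j then (y i - y j) ^ 2 else 0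

lemma sum_offDiag_add_eq {ι : Type*} [Fintype ι] [DecidableEq ι] (y : ι → ℝ) :
    ∑ i, ∑ j, (if i ≠ j then y i + y j else 0) = 2 * (Fintype.card ι - 1) * ∑ i, y i := by
  have row : ∀ i, ∑ j, (if i ≠ j then y i + y j else 0)
      = ∑ j, (y i + y j) - (y i + y i) := by
    intro i
    rw [eq_sub_iff_add_eq, ← sum_erase_add univ _ (mem_univ i), if_neg (not_not.2 rfl),
      add_zero, ← sum_erase_add univ _ (mem_univ i)]
    congr 1
    exact sum_congr rfl fun j hj => if_pos (Ne.symm (ne_of_mem_erase hj))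
  simp only [row, sum_sub_distrib, sum_add_distrib, sum_const,
    card_univ, nsmul_eq_mul, ← mul_sum]
  ring

lemma sum_offDiag_sq_sub_le {ι : Type*} [Fintype ι] [DecidableEq ι] {y : ι → ℝ}
    (hy : ∀ i, y i ∈ Set.Icc (0 : ℝ) 1) :
    ∑ i, ∑ j, (if i ≠ j then (y i - y j) ^ 2 else 0)
      ≤ 2 * (Fintype.card ι - 1) * ∑ i, y i := by
  rw [← sum_offDiag_add_eq]
  gcongr with i _ j _
  split_ifs
  · obtain ⟨hi0, hi1⟩ := hy i
    obtain ⟨hj0, hj1⟩ := hy j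
    nlinarith
  · rfl

lemma sampleVariance_le_mean {n : ℕ} (hn : 2 ≤ n) {y : Fin n → ℝ}
    (hy : ∀ i, y i ∈ Set.Icc (0 : ℝ) 1) :
    sampleVariance y ≤ (∑ i, y i) / n := by
  have hn' : (2 : ℝ) ≤ n := by exact_mod_cast hn
  have hsum := sum_offDiag_sq_sub_le hy
  rw [Fintype.card_fin] at hsum
  calc sampleVariance y ≤ (1 / (2 * n * (n - 1))) * (2 * (n - 1) * ∑ i, y i) := by
        unfold sampleVariance
        have : (0 : ℝ) ≤ 1 / (2 * n * (n - 1)) := by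
          have : (0 : ℝ) < n - 1 := by linarith
          positivity
        gcongr
    _ = (∑ i, y i) / n := by
        have : (n : ℝ) - 1 ≠ 0 := by linarith
        field_simp

lemma le_two_mul_of_sub_le_bernstein {m t μ : ℝ} (ht : 0 ≤ t) (hm : 16 * t ≤ m)
    (h : m - μ ≤ 7 * t / 3 + √(2 * m * t)) : m ≤ 2 * μ := by
  have hsqrt : √(2 * m * t) ≤ m / 2 - 7 * t / 3 := by
    -- `(m/2 - 7t/3)² - 2mt = (m - 16t)²/4 + 11(m - 16t)t/3 + t²/9`
    rw [Real.sqrt_le_left (by linarith)]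
    nlinarith [sq_nonneg (m - 16 * t), mul_nonneg (sub_nonneg.2 hm) ht, sq_nonneg t]
  linarith

lemma mean_le_max_of_empiricalBernstein {n : ℕ} (hn : 2 ≤ n) {L μ : ℝ} (hL : 0 ≤ L)
    {y : Fin n → ℝ} (hy : ∀ i, y i ∈ Set.Icc (0 : ℝ) 1)
    (h : (∑ i, y i) / n - μ ≤ 7 * L / (3 * (n - 1)) + √(2 * sampleVariance y * L / n)) :
    (∑ i, y i) / n ≤ max (16 * L / (n - 1)) (2 * μ) := by
  set m := (∑ i, y i) / n
  set t := L / (n - 1) with ht_def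
  have hn' : (2 : ℝ) ≤ n := by exact_mod_cast hn
  have ht : 0 ≤ t := div_nonneg hL (by linarith)
  have hvar : 0 ≤ sampleVariance y := by
    unfold sampleVariance
    have : (0 : ℝ) < n - 1 := by linarith
    positivity
  have hsqrt : √(2 * sampleVariance y * L / n) ≤ √(2 * m * t) := by
    apply Real.sqrt_le_sqrt
    calc 2 * sampleVariance y * L / n ≤ 2 * m * L / (n - 1) := by
          have hvm := sampleVariance_le_mean hn hy
          have hm : 0 ≤ m := hvar.trans hvm
          exact div_le_div₀ (by positivity) (by gcongr) (by linarith) (by linarith)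
      _ = 2 * m * t := by rw [ht_def]; ring
  have h7 : 7 * L / (3 * (n - 1)) = 7 * t / 3 := by
    rw [ht_def, mul_comm (3 : ℝ), ← div_div]
    ring
  have hbern : m - μ ≤ 7 * t / 3 + √(2 * m * t) := by linarith
  rcases le_or_gt m (16 * t) with hsmall | hlarge
  · exact le_max_of_le_left (hsmall.trans_eq (by rw [ht_def]; ring))
  · exact le_max_of_le_right (le_two_mul_of_sub_le_bernstein ht hlarge.le hbern)

theorem stmt3 {Ω : Type*} [MeasurableSpace Ω] (P : Measure Ω)
    (n : ℕ) (hn : 2 ≤ n) (δ : ℝ) (hδ : δ ∈ Set.Ioo (0:ℝ) 1)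
    (Y : Fin n → Ω → ℝ)
    (hY : ∀ i ω, Y i ω ∈ Set.Icc (0:ℝ) 1)
    (μ : ℝ)
    (hbern : P {ω | (∑ i, Y i ω)/n - μ ≤
        7*Real.log (2/δ)/(3*(n-1)) +
        Real.sqrt (2*((1/(2*n*(n-1))) *
          ∑ i, ∑ j, if i ≠ j then (Y i ω - Y j ω)^2 else 0) * Real.log (2/δ)/n)}
      ≥ ENNReal.ofReal (1-δ)) :
    P {ω | (∑ i, Y i ω)/n ≤ max (16*Real.log (2/δ)/(n-1)) (2*μ)}
      ≥ ENNReal.ofReal (1-δ) := by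
  have hL : 0 ≤ Real.log (2 / δ) :=
    Real.log_nonneg ((one_le_div hδ.1).2 (by linarith [hδ.2]))
  exact hbern.trans <| measure_mono fun ω hω =>
    mean_le_max_of_empiricalBernstein hn hL (fun i => hY i ω) hω
end
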